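/- arXiv:1304.3707 — 4 statements merged into one kernel-verified Lean document; each statement's English description precedes it below -/
import Mathlib

section
/- Let p be a prime, F = F_p, k ≥ 2, let a, b ∈ F be nonzero, and let S_1,...,S_k be intervals of F. Then the function f : F^k → F given by f(x_1,...,x_k) = b·∏_{j=1}^k Q_{S_j}(x_j) + a cannot be written as f = c·∏_{j=1}^k Q_{S'_j}(x_j) for any nonzero c ∈ F and intervals S'_1,...,S'_k of F. -/
open Finset

/-- The indicator function `Q_S` of the complement of `S`: `Q_S(x) = 0` if `x ∈ S`, else `1`. -/
noncomputable def Q {F : Type*} [Zero F] [One F] (S : Set F) (x : F) : F :=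
  haveI := Classical.dec (x ∈ S)
  if x ∈ S then 0 else 1

/-- `S ⊆ F_p` is an interval if `S = {0,…,j}` or `Sᶜ = {0,…,j}` for some `0 ≤ j < p-1`. -/
def IsInterval (p : ℕ) (S : Set (ZMod p)) : Prop :=
  ∃ j : ℕ, j < p - 1 ∧ (S = {x : ZMod p | x.val ≤ j} ∨ S = {x : ZMod p | x.val ≤ j}ᶜ)

/-- `f` is `<i:a:b>` canalizing: `f x = b` whenever `x i = a`. -/
def IsCanalizing {F : Type*} {n : ℕ} (f : (Fin n → F) → F) (i : Fin n) (a b : F) : Prop :=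
  ∀ x, x i = a → f x = b

/-- The nested canalizing conditions for `f` along an ordered list `τ 0, τ 1, …` of
(distinct) variables, with canalizing input sets `S` and canalized output values `b`
(with `b (Fin.last m)` playing the role of the default output `b_{m+1}`). -/
def NCAlong {F : Type*} {n m : ℕ} (f : (Fin n → F) → F) (τ : Fin m → Fin n)
    (S : Fin m → Set F) (b : Fin (m + 1) → F) : Prop :=
  (∀ k : Fin m, ∀ x : Fin n → F,
      (∀ j : Fin m, j < k → x (τ j) ∉ S j) → x (τ k) ∈ S k → f x = b k.castSucc) ∧
  (∀ x : Fin n → F, (∀ j : Fin m, x (τ j) ∉ S j) → f x = b (Fin.last m))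

/-- `f : F_p^n → F_p` is a nested canalizing function. -/
def IsNCF (p n : ℕ) (f : (Fin n → ZMod p) → ZMod p) : Prop :=
  ∃ (σ : Equiv.Perm (Fin n)) (S : Fin n → Set (ZMod p)) (b : Fin (n + 1) → ZMod p),
    (∀ i, IsInterval p (S i)) ∧
    b ⟨n - 1, Nat.lt_succ_of_le (Nat.sub_le n 1)⟩ ≠ b (Fin.last n) ∧
    NCAlong f (⇑σ) S b

/-- `f : F^n → F` is a generalized nested canalizing function (canalizing input sets are
arbitrary nonempty proper subsets). -/
def IsGNCF {F : Type*} [Field F] (n : ℕ) (f : (Fin n → F) → F) : Prop :=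
  ∃ (σ : Equiv.Perm (Fin n)) (S : Fin n → Set F) (b : Fin (n + 1) → F),
    (∀ i, (S i).Nonempty ∧ S i ≠ Set.univ) ∧
    b ⟨n - 1, Nat.lt_succ_of_le (Nat.sub_le n 1)⟩ ≠ b (Fin.last n) ∧
    NCAlong f (⇑σ) S b

/-- `nestedVal r m B c = m 0 * (m 1 * ( ⋯ (m (r-1) * c + B (r-1)) ⋯ ) + B 1) + B 0`,
the layered expression `M_1(M_2(⋯(B_{r+1} M_r + B_r)⋯) + B_2) + B_1` where `m i = M_{i+1}`,
`B i = B_{i+1}` and `c = B_{r+1}`. -/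
def nestedVal {F : Type*} [Mul F] [Add F] : ℕ → (ℕ → F) → (ℕ → F) → F → F
  | 0, _, _, c => c
  | r + 1, m, B, c => m 0 * nestedVal r (fun i => m (i + 1)) (fun i => B (i + 1)) c + B 0

/-- `f = M_1(M_2(⋯(M_{r-1}(B_{r+1}·M_r + B_r) + B_{r-1})⋯) + B_2) + B_1` is a layered
representation of `f` with `r` layers, where layer `i` (`0 ≤ i < r`, 0-indexed) has variable
index set `L i` (the `L i` partition `Fin n`), each variable `m` has canalizing set `T m`
(required to satisfy `Ok`), `M_{i+1} = ∏_{j ∈ L i} Q_{T j}(x_j)`, and the constants are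
`B_1 = B 0 ∈ F`, `B_2 = B 1, …, B_{r+1} = B r` all nonzero, with
`B_r + B_{r+1} ≠ 0` whenever the last layer has just one variable. -/
def IsLayeredRep {F : Type*} [CommRing F] (Ok : Set F → Prop) (n : ℕ)
    (f : (Fin n → F) → F) (r : ℕ) (L : ℕ → Finset (Fin n)) (T : Fin n → Set F)
    (B : ℕ → F) : Prop :=
  1 ≤ r ∧
  (∀ i < r, (L i).Nonempty) ∧
  (∀ i < r, ∀ j < r, i ≠ j → Disjoint (L i) (L j)) ∧
  (Finset.range r).biUnion L = Finset.univ ∧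
  (∀ m : Fin n, Ok (T m)) ∧
  (∀ i, 1 ≤ i → i ≤ r → B i ≠ 0) ∧
  ((L (r - 1)).card = 1 → B (r - 1) + B r ≠ 0) ∧
  ∀ x : Fin n → F, f x = nestedVal r (fun i => ∏ j ∈ L i, Q (T j) (x j)) B (B r)


lemma interval_nonempty {p : ℕ} [Fact p.Prime] {S : Set (ZMod p)} (h : IsInterval p S) :
    S.Nonempty := by
  haveI : NeZero p := ⟨(Fact.out : p.Prime).pos.ne'⟩
  obtain ⟨j, hj, hS | hS⟩ := h
  · exact ⟨0, by simp [hS]⟩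
  · refine ⟨((p - 1 : ℕ) : ZMod p), ?_⟩
    have hp := (Fact.out : p.Prime).two_le
    simp only [hS, Set.mem_compl_iff, Set.mem_setOf_eq, not_le]
    rw [ZMod.val_natCast_of_lt (by omega)]
    omega

/-- For `k ≥ 2`, nonzero `a b : F_p` and intervals `S_1,…,S_k`, the function
`f(x) = b·∏_j Q_{S_j}(x_j) + a` cannot be written as `c·∏_j Q_{S'_j}(x_j)` with `c ≠ 0`
and intervals `S'_j`. -/
theorem stmt6 (p k : ℕ) [Fact p.Prime] (hk : 2 ≤ k) (a b : ZMod p) (ha : a ≠ 0) (hb : b ≠ 0)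
    (S : Fin k → Set (ZMod p)) (hS : ∀ j, IsInterval p (S j)) :
    ¬ ∃ (c : ZMod p) (S' : Fin k → Set (ZMod p)), c ≠ 0 ∧ (∀ j, IsInterval p (S' j)) ∧
      ∀ x : Fin k → ZMod p,
        b * ∏ j, Q (S j) (x j) + a = c * ∏ j, Q (S' j) (x j) := by
  rintro ⟨c, S', hc, hS', heq⟩
  obtain ⟨s0, hs0⟩ := interval_nonempty (hS ⟨0, by omega⟩)
  obtain ⟨t, ht⟩ := interval_nonempty (hS' ⟨1, by omega⟩)
  set i0 : Fin k := ⟨0, by omega⟩ with hi0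
  set i1 : Fin k := ⟨1, by omega⟩ with hi1
  set x : Fin k → ZMod p := fun j => if j = i0 then s0 else t with hxdef
  have hx0 : x i0 = s0 := by simp [hxdef]
  have hx1 : x i1 = t := by simp [hxdef, hi0, hi1, Fin.ext_iff]
  have hQ0 : Q (S i0) (x i0) = 0 := by
    rw [hx0]; simp only [Q]; rw [if_pos hs0]
  have hL : b * ∏ j, Q (S j) (x j) + a = a := by
    rw [Finset.prod_eq_zero (Finset.mem_univ i0) hQ0]; ring
  have heqx := heq x
  rw [hL] at heqx
  have hne : c * ∏ j, Q (S' j) (x j) ≠ 0 := heqx ▸ ha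
  have hQ1 : Q (S' i1) (x i1) = 0 := by
    rw [hx1]; simp only [Q]; rw [if_pos ht]
  exact hne (by rw [Finset.prod_eq_zero (Finset.mem_univ i1) hQ1, mul_zero])
end

section
/- Let p be a prime, F = F_p, and n ≥ 2. A function f : F^n → F is nested canalizing if and only if there exist r ≥ 1, positive integers k_1,...,k_r with k_1 + ... + k_r = n, a partition of {1,...,n} into index sets {i_1,...,i_{k_1}},...,{r_1,...,r_{k_r}} (the variables of the layers), intervals S_{i_j} of F for each index, and constants B_1 ∈ F, B_2,...,B_{r+1} ∈ F \ {0}, with B_r + B_{r+1} ≠ 0 whenever k_r = 1, such that f(x_1,...,x_n) = M_1(M_2(⋯(M_{r-1}(B_{r+1}·M_r + B_r) + B_{r-1})⋯) + B_2) + B_1, where M_i = ∏_{j=1}^{k_i} Q_{S_{i_j}}(x_{i_j}). -/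
open Finset

lemma Q_eq_zero {F : Type*} [Zero F] [One F] {S : Set F} {x : F} (h : x ∈ S) : Q S x = 0 := by
  simp [Q, h]

lemma Q_eq_one {F : Type*} [Zero F] [One F] {S : Set F} {x : F} (h : x ∉ S) : Q S x = 1 := by
  simp [Q, h]

lemma isInterval_compl {p : ℕ} {S : Set (ZMod p)} (h : IsInterval p S) : IsInterval p Sᶜ := by
  obtain ⟨j, hj, h | h⟩ := h
  · exact ⟨j, hj, Or.inr (by rw [h])⟩
  · exact ⟨j, hj, Or.inl (by rw [h, compl_compl])⟩

lemma nestedVal_allOne {F : Type*} [CommRing F] (r : ℕ) (m B : ℕ → F) (c : F)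
    (h : ∀ i < r, m i = 1) : nestedVal r m B c = c + ∑ i ∈ Finset.range r, B i := by
  induction r generalizing m B with
  | zero => simp [nestedVal]
  | succ r ih =>
    rw [nestedVal, h 0 (by omega), one_mul, ih _ _ (fun i hi => h (i+1) (by omega)),
      Finset.sum_range_succ']
    ring

lemma nestedVal_firstZero {F : Type*} [CommRing F] (r : ℕ) (m B : ℕ → F) (c : F)
    (i₀ : ℕ) (hi₀ : i₀ < r) (h1 : ∀ i < i₀, m i = 1) (h0 : m i₀ = 0) :
    nestedVal r m B c = ∑ i ∈ Finset.range (i₀+1), B i := by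
  induction r generalizing m B i₀ with
  | zero => omega
  | succ r ih =>
    cases i₀ with
    | zero => simp [nestedVal, h0]
    | succ i₀ =>
      rw [nestedVal, h1 0 (by omega), one_mul,
        ih _ _ i₀ (by omega) (fun i hi => h1 (i+1) (by omega)) h0, Finset.sum_range_succ',
        Finset.sum_range_succ' B (i₀+1), Finset.sum_range_succ' (fun i => B (i+1)) i₀]

/-- The layer index of position `k` given the value sequence `b'`. -/
noncomputable def lay {F : Type*} (b' : ℕ → F) : ℕ → ℕ
  | 0 => 0
  | k + 1 =>
    haveI := Classical.dec (b' k = b' (k+1))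
    lay b' k + (if b' k = b' (k+1) then 0 else 1)

lemma lay_succ {F : Type*} (b' : ℕ → F) (k : ℕ) :
    lay b' (k+1) = lay b' k + (haveI := Classical.dec (b' k = b' (k+1));
      if b' k = b' (k+1) then 0 else 1) := rfl

lemma lay_succ_of_eq {F : Type*} {b' : ℕ → F} {k : ℕ} (h : b' k = b' (k+1)) :
    lay b' (k+1) = lay b' k := by
  rw [lay_succ]; simp [h]

lemma lay_succ_of_ne {F : Type*} {b' : ℕ → F} {k : ℕ} (h : b' k ≠ b' (k+1)) :
    lay b' (k+1) = lay b' k + 1 := by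
  rw [lay_succ]; simp [h]

lemma lay_succ_le {F : Type*} (b' : ℕ → F) (k : ℕ) : lay b' (k+1) ≤ lay b' k + 1 := by
  rw [lay_succ]; split <;> omega

lemma lay_le_succ {F : Type*} (b' : ℕ → F) (k : ℕ) : lay b' k ≤ lay b' (k+1) := by
  rw [lay_succ]; split <;> omega

lemma lay_mono {F : Type*} (b' : ℕ → F) : Monotone (lay b') :=
  monotone_nat_of_le_succ (lay_le_succ b')

lemma lay_eq_succ_iff {F : Type*} {b' : ℕ → F} {k : ℕ} :
    lay b' k = lay b' (k+1) ↔ b' k = b' (k+1) := by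
  by_cases h : b' k = b' (k+1)
  · simp [h, lay_succ_of_eq h]
  · simp [h, lay_succ_of_ne h]

/-- `b'` is constant on each layer. -/
lemma lay_const {F : Type*} {b' : ℕ → F} {j k : ℕ} (hjk : j ≤ k)
    (h : lay b' j = lay b' k) : b' j = b' k := by
  induction k with
  | zero =>
    have : j = 0 := by omega
    rw [this]
  | succ k ih =>
    rcases Nat.lt_or_ge j (k+1) with hlt | hge
    · have h1 : lay b' j ≤ lay b' k := lay_mono b' (by omega)
      have h2 : lay b' k ≤ lay b' (k+1) := lay_le_succ b' k
      have h3 : lay b' k = lay b' (k+1) := by omega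
      rw [ih (by omega) (by omega), lay_eq_succ_iff.mp h3]
    · have : j = k + 1 := by omega
      rw [this]

/-- intermediate value for `lay`. -/
lemma lay_surj {F : Type*} (b' : ℕ → F) (K : ℕ) :
    ∀ i ≤ lay b' K, ∃ k ≤ K, lay b' k = i := by
  induction K with
  | zero =>
    intro i hi
    simp only [lay] at hi
    exact ⟨0, le_refl _, by simp only [lay]; omega⟩
  | succ K ih =>
    intro i hi
    rcases le_or_gt i (lay b' K) with h | h
    · obtain ⟨k, hk, hk2⟩ := ih i h
      exact ⟨k, by omega, hk2⟩
    · have := lay_succ_le b' K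
      exact ⟨K+1, le_refl _, by omega⟩

/-- Extend `b : Fin (n+1) → F` to `ℕ` by clamping. -/
def bN {F : Type*} {n : ℕ} (b : Fin (n + 1) → F) : ℕ → F :=
  fun k => b ⟨min k n, by omega⟩

lemma bN_eq {F : Type*} {n : ℕ} (b : Fin (n + 1) → F) (k : ℕ) (hk : k ≤ n) :
    bN b k = b ⟨k, by omega⟩ := by
  unfold bN
  congr 1
  exact Fin.ext (by simp; omega)

/-- Normalized NCF data: additionally `b_n ≠ b_{n-2}` whenever the last run has length 1. -/
lemma ncf_norm {p n : ℕ} (hn : 2 ≤ n) {f : (Fin n → ZMod p) → ZMod p} (h : IsNCF p n f) :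
    ∃ (σ : Equiv.Perm (Fin n)) (S : Fin n → Set (ZMod p)) (b : Fin (n + 1) → ZMod p),
      (∀ i, IsInterval p (S i)) ∧ NCAlong f (⇑σ) S b ∧
      bN b (n - 1) ≠ bN b n ∧
      (bN b (n - 2) ≠ bN b (n - 1) → bN b n ≠ bN b (n - 2)) := by
  obtain ⟨σ, S, b, hint, hbne, hnc⟩ := h
  have hb1 : bN b (n - 1) ≠ bN b n := by
    rw [bN_eq b (n-1) (by omega), bN_eq b n (by omega)]
    exact hbne
  by_cases hcase : bN b n ≠ bN b (n - 2)
  · exact ⟨σ, S, b, hint, hnc, hb1, fun _ => hcase⟩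
  push_neg at hcase
  classical
  set S' : Fin n → Set (ZMod p) := fun j => if (j : ℕ) = n - 1 then (S j)ᶜ else S j with hS'
  set b' : Fin (n + 1) → ZMod p := fun k => if (k : ℕ) = n - 1 then b (Fin.last n) else
      if (k : ℕ) = n then b ⟨n - 1, by omega⟩ else b k with hb'
  have hS'ne : ∀ j : Fin n, (j : ℕ) ≠ n - 1 → S' j = S j := by
    intro j hj; simp only [hS']; rw [if_neg hj]
  have hS'last : ∀ j : Fin n, (j : ℕ) = n - 1 → S' j = (S j)ᶜ := by
    intro j hj; simp only [hS']; rw [if_pos hj]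
  have hb'1 : ∀ k : Fin (n + 1), (k : ℕ) = n - 1 → b' k = b (Fin.last n) := by
    intro k hk; simp only [hb']; rw [if_pos hk]
  have hb'2 : ∀ k : Fin (n + 1), (k : ℕ) = n → b' k = b ⟨n - 1, by omega⟩ := by
    intro k hk; simp only [hb']; rw [if_neg (by omega), if_pos hk]
  have hb'3 : ∀ k : Fin (n + 1), (k : ℕ) ≠ n - 1 → (k : ℕ) ≠ n → b' k = b k := by
    intro k h1 h2; simp only [hb']; rw [if_neg h1, if_neg h2]
  refine ⟨σ, S', b', ?_, ?_, ?_, ?_⟩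
  · intro i
    by_cases hi : (i : ℕ) = n - 1
    · rw [hS'last i hi]; exact isInterval_compl (hint i)
    · rw [hS'ne i hi]; exact hint i
  · constructor
    · intro k x hprior hk
      by_cases hkval : (k : ℕ) = n - 1
      · have hall : ∀ j : Fin n, x (σ j) ∉ S j := by
          intro j
          rcases lt_or_ge j k with hj | hj
          · have hjlt : (j : ℕ) < (k : ℕ) := hj
            have := hprior j hj
            rwa [hS'ne j (by omega)] at this
          · have hjk : j = k := by
              apply Fin.ext
              have h1 : (j : ℕ) < n := j.isLt
              have h2 : (k : ℕ) ≤ (j : ℕ) := hj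
              omega
            rw [hjk]
            rw [hS'last k hkval] at hk
            exact hk
        rw [hnc.2 x hall]
        rw [hb'1 k.castSucc (by simpa using hkval)]
      · have hmem : x (σ k) ∈ S k := by rwa [hS'ne k hkval] at hk
        have hp : ∀ j : Fin n, j < k → x (σ j) ∉ S j := by
          intro j hj
          have hjlt : (j : ℕ) < (k : ℕ) := hj
          have hkn : (k : ℕ) < n := k.isLt
          have := hprior j hj
          rwa [hS'ne j (by omega)] at this
        rw [hnc.1 k x hp hmem]
        rw [hb'3 k.castSucc (by simpa using hkval) (by have := k.isLt; simp; omega)]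
    · intro x hall
      have hmem : x (σ (⟨n - 1, by omega⟩ : Fin n)) ∈ S ⟨n - 1, by omega⟩ := by
        have := hall ⟨n - 1, by omega⟩
        rw [hS'last ⟨n - 1, by omega⟩ rfl] at this
        simpa using this
      have hp : ∀ j : Fin n, j < (⟨n - 1, by omega⟩ : Fin n) → x (σ j) ∉ S j := by
        intro j hj
        have hjlt : (j : ℕ) < n - 1 := hj
        have := hall j
        rwa [hS'ne j (by omega)] at this
      rw [hnc.1 ⟨n - 1, by omega⟩ x hp hmem]
      rw [hb'2 (Fin.last n) (by simp)]
      rfl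
  · rw [bN_eq _ (n-1) (by omega), bN_eq _ n (by omega)]
    rw [hb'1 ⟨n-1, by omega⟩ rfl, hb'2 ⟨n, by omega⟩ rfl]
    intro hcon
    apply hb1
    rw [bN_eq _ (n-1) (by omega), bN_eq _ n (by omega)]
    rw [← hcon]
    rfl
  · intro hcon
    exfalso
    apply hcon
    rw [bN_eq _ (n-2) (by omega), bN_eq _ (n-1) (by omega)]
    rw [hb'3 ⟨n-2, by omega⟩ (by simp; omega) (by simp; omega), hb'1 ⟨n-1, by omega⟩ rfl]
    have h2 := hcase
    rw [bN_eq _ n (by omega), bN_eq _ (n-2) (by omega)] at h2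
    rw [← h2]
    rfl

lemma ncf_to_layered {p n : ℕ} (hn : 2 ≤ n) {f : (Fin n → ZMod p) → ZMod p}
    (h : IsNCF p n f) :
    ∃ (r : ℕ) (L : ℕ → Finset (Fin n)) (T : Fin n → Set (ZMod p)) (B : ℕ → ZMod p),
      IsLayeredRep (IsInterval p) n f r L T B := by
  classical
  obtain ⟨σ, S, b, hint, hnc, hb1, hP⟩ := ncf_norm hn h
  set b' : ℕ → ZMod p := bN b with hb'def
  set r : ℕ := lay b' n with hrdef
  have hn1 : n - 1 + 1 = n := by omega
  have hℓ0 : lay b' 0 = 0 := rfl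
  have hlayn : lay b' n = lay b' (n - 1) + 1 := by
    have hb1' : b' (n - 1) ≠ b' (n - 1 + 1) := by rw [hn1]; exact hb1
    have := lay_succ_of_ne hb1'
    rw [hn1] at this
    exact this
  have hr1 : 1 ≤ r := by omega
  set L : ℕ → Finset (Fin n) := fun i => Finset.univ.filter fun v => lay b' ((σ.symm v : Fin n) : ℕ) = i with hL
  set T : Fin n → Set (ZMod p) := fun v => S (σ.symm v) with hT
  set e : ℕ → ℕ := fun i => sInf {k | lay b' k = i} with he
  set C : ℕ → ZMod p := fun i => b' (e i) with hC
  set B : ℕ → ZMod p := fun i => if i = 0 then C 0 else C i - C (i - 1) with hB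
  have hmemL : ∀ (v : Fin n) (i : ℕ), v ∈ L i ↔ lay b' ((σ.symm v : Fin n) : ℕ) = i := by
    intro v i; simp [hL]
  have hCkey : ∀ k, C (lay b' k) = b' k := by
    intro k
    have h1 : lay b' (e (lay b' k)) = lay b' k := Nat.sInf_mem (⟨k, rfl⟩ : {k' | lay b' k' = lay b' k}.Nonempty)
    have h2 : e (lay b' k) ≤ k := Nat.sInf_le rfl
    exact lay_const h2 h1
  have hBsub : ∀ i, i ≠ 0 → B i = C i - C (i - 1) := by
    intro i hi; rw [hB]; simp only [if_neg hi]
  have htel : ∀ i, ∑ j ∈ Finset.range (i + 1), B j = C i := by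
    intro i
    induction i with
    | zero => simp [hB]
    | succ i ih =>
      rw [Finset.sum_range_succ, ih, hBsub (i + 1) (Nat.succ_ne_zero i), Nat.add_sub_cancel]
      ring
  have hesurj : ∀ i ≤ r, lay b' (e i) = i := by
    intro i hi
    obtain ⟨k, _, hki⟩ := lay_surj b' n i (by omega)
    exact Nat.sInf_mem (⟨k, hki⟩ : {k' | lay b' k' = i}.Nonempty)
  have hBne : ∀ i, 1 ≤ i → i ≤ r → B i ≠ 0 := by
    intro i h1 h2
    have hei : lay b' (e i) = i := hesurj i h2
    have hepos : 1 ≤ e i := by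
      rcases Nat.eq_zero_or_pos (e i) with h | h
      · rw [h] at hei; omega
      · omega
    have hnotmem : lay b' (e i - 1) ≠ i := by
      intro hc
      exact Nat.notMem_of_lt_sInf (show e i - 1 < e i by omega) hc
    have hstep : lay b' (e i - 1 + 1) ≤ lay b' (e i - 1) + 1 := lay_succ_le b' _
    have hmono : lay b' (e i - 1) ≤ lay b' (e i) := lay_mono b' (by omega)
    have heq : e i - 1 + 1 = e i := by omega
    rw [heq] at hstep
    have hlm1 : lay b' (e i - 1) = i - 1 := by omega
    have hbne2 : b' (e i - 1) ≠ b' (e i) := by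
      intro hc
      have hc' : b' (e i - 1) = b' (e i - 1 + 1) := by rw [heq]; exact hc
      have := lay_succ_of_eq hc'
      rw [heq] at this
      omega
    have hCi1 : C (i - 1) = b' (e i - 1) := by rw [← hlm1]; exact hCkey (e i - 1)
    rw [hBsub i (by omega), hCi1]
    intro hc
    exact hbne2 (by rw [sub_eq_zero] at hc; exact hc.symm)
  have hlbound : ∀ v : Fin n, lay b' ((σ.symm v : Fin n) : ℕ) < r := by
    intro v
    have h1 : lay b' ((σ.symm v : Fin n) : ℕ) ≤ lay b' (n - 1) := by
      apply lay_mono b'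
      have := (σ.symm v).isLt
      omega
    omega
  refine ⟨r, L, T, B, hr1, ?_, ?_, ?_, ?_, hBne, ?_, ?_⟩
  · -- nonempty layers
    intro i hi
    obtain ⟨k, hk, hki⟩ := lay_surj b' n i (by omega)
    have hkn : k < n := by
      rcases Nat.lt_or_ge k n with h | h
      · exact h
      · exfalso; have : k = n := by omega
        rw [this] at hki; omega
    refine ⟨σ ⟨k, hkn⟩, ?_⟩
    rw [hmemL]
    simp only [Equiv.symm_apply_apply]
    exact hki
  · -- disjoint
    intro i _ j _ hij
    rw [Finset.disjoint_left]
    intro v hvi hvj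
    rw [hmemL] at hvi hvj
    omega
  · -- cover
    apply Finset.eq_univ_iff_forall.mpr
    intro v
    rw [Finset.mem_biUnion]
    exact ⟨lay b' ((σ.symm v : Fin n) : ℕ), Finset.mem_range.mpr (hlbound v), (hmemL v _).mpr rfl⟩
  · -- intervals
    intro v; exact hint _
  · -- last layer card 1
    intro hcard
    have hln1 : lay b' (n - 1) = r - 1 := by omega
    have hvmem : σ ⟨n - 1, by omega⟩ ∈ L (r - 1) := by
      rw [hmemL]; simp only [Equiv.symm_apply_apply]; exact hln1
    have hr2 : 2 ≤ r := by
      by_contra hcon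
      have hre : r = 1 := by omega
      have huniv : ∀ v : Fin n, v ∈ L (r - 1) := by
        intro v
        rw [hmemL]
        have := hlbound v
        omega
      have : Finset.univ ⊆ L (r - 1) := fun v _ => huniv v
      have hcge : n ≤ (L (r - 1)).card := by
        calc n = (Finset.univ : Finset (Fin n)).card := by simp
        _ ≤ _ := Finset.card_le_card this
      omega
    have hl2 : lay b' (n - 2) = r - 2 := by
      have hmono2 : lay b' (n - 2) ≤ lay b' (n - 1) := lay_mono b' (by omega)
      have hstep2 : lay b' (n - 2 + 1) ≤ lay b' (n - 2) + 1 := lay_succ_le b' _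
      have hn2 : n - 2 + 1 = n - 1 := by omega
      rw [hn2] at hstep2
      have hne2 : lay b' (n - 2) ≠ r - 1 := by
        intro hc
        have hmem2 : σ ⟨n - 2, by omega⟩ ∈ L (r - 1) := by
          rw [hmemL]; simp only [Equiv.symm_apply_apply]; exact hc
        obtain ⟨a, ha⟩ := Finset.card_eq_one.mp hcard
        rw [ha, Finset.mem_singleton] at hvmem hmem2
        have heq2 : σ ⟨n - 2, by omega⟩ = σ ⟨n - 1, by omega⟩ := hmem2.trans hvmem.symm
        have := σ.injective heq2
        have := Fin.mk.injEq (n-2) (by omega : n - 2 < n) (n-1) (by omega : n - 1 < n) ▸ this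
        omega
      omega
    have hbn2 : b' (n - 2) ≠ b' (n - 1) := by
      intro hc
      have hn2 : n - 2 + 1 = n - 1 := by omega
      have hc' : b' (n - 2) = b' (n - 2 + 1) := by rw [hn2]; exact hc
      have := lay_succ_of_eq hc'
      rw [hn2] at this
      omega
    have hPP : b' n ≠ b' (n - 2) := hP hbn2
    have hrr : r - 1 - 1 = r - 2 := by omega
    rw [hBsub (r - 1) (by omega), hBsub r (by omega), hrr]
    have hCr : C r = b' n := by
      have := hCkey n
      rw [← hrdef] at this
      exact this
    have hCr2 : C (r - 2) = b' (n - 2) := by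
      have := hCkey (n - 2)
      rw [hl2] at this
      exact this
    have : C (r - 1) - C (r - 2) + (C r - C (r - 1)) = C r - C (r - 2) := by ring
    rw [this, hCr, hCr2]
    intro hc
    exact hPP (by rw [sub_eq_zero] at hc; exact hc)
  · -- evaluation
    intro x
    by_cases hx : ∃ k : ℕ, ∃ hk : k < n, x (σ ⟨k, hk⟩) ∈ S ⟨k, hk⟩
    · obtain ⟨hKn, hKmem⟩ := Nat.find_spec hx
      set K := Nat.find hx with hK
      have hmin : ∀ j, j < K → ∀ hj : j < n, x (σ ⟨j, hj⟩) ∉ S ⟨j, hj⟩ := by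
        intro j hjK hjn hm
        exact Nat.find_min hx hjK ⟨hjn, hm⟩
      have hfx : f x = b' K := by
        rw [hnc.1 ⟨K, hKn⟩ x ?_ hKmem]
        · rw [hb'def, bN_eq b K (by omega)]
          rfl
        · intro j hj
          exact hmin j.val hj j.isLt
      have hi₀ : lay b' K < r := by
        have h1 : lay b' K ≤ lay b' (n - 1) := lay_mono b' (by omega)
        omega
      rw [hfx, nestedVal_firstZero r _ B (B r) (lay b' K) hi₀ ?_ ?_, htel (lay b' K)]
      · exact (hCkey K).symm
      · -- earlier layers all one
        intro i hiK
        apply Finset.prod_eq_one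
        intro v hv
        rw [hmemL] at hv
        have hjK : ((σ.symm v : Fin n) : ℕ) < K := by
          by_contra hcon
          have : lay b' K ≤ lay b' ((σ.symm v : Fin n) : ℕ) := lay_mono b' (by omega)
          omega
        have hout := hmin _ hjK (σ.symm v).isLt
        have hv' : σ (σ.symm v) = v := σ.apply_symm_apply v
        simp only [hT]
        apply Q_eq_one
        intro hc
        apply hout
        show x (σ (σ.symm v)) ∈ S (σ.symm v)
        rw [hv']
        exact hc
      · -- layer lay b' K is zero
        apply Finset.prod_eq_zero (i := σ ⟨K, hKn⟩)
        · rw [hmemL]; simp only [Equiv.symm_apply_apply]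
        · apply Q_eq_zero
          rw [hT]
          simpa only [Equiv.symm_apply_apply] using hKmem
    · push_neg at hx
      have hall : ∀ j : Fin n, x (σ j) ∉ S j := fun j => hx j.val j.isLt
      have hfx : f x = b' n := by
        rw [hnc.2 x hall, hb'def, bN_eq b n le_rfl]
        rfl
      rw [hfx, nestedVal_allOne r _ B (B r) ?_]
      · have hCr : C r = b' n := by
          have := hCkey n
          rw [← hrdef] at this
          exact this
        rw [← hCr, ← htel r, Finset.sum_range_succ]
        ring
      · intro i _
        apply Finset.prod_eq_one
        intro v _
        have hv' : σ (σ.symm v) = v := σ.apply_symm_apply v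
        simp only [hT]
        apply Q_eq_one
        intro hc
        apply hall (σ.symm v)
        rw [hv']
        exact hc

lemma layered_to_ncf {p n : ℕ} (hn : 2 ≤ n) {f : (Fin n → ZMod p) → ZMod p}
    {r : ℕ} {L : ℕ → Finset (Fin n)} {T : Fin n → Set (ZMod p)} {B : ℕ → ZMod p}
    (h : IsLayeredRep (IsInterval p) n f r L T B) : IsNCF p n f := by
  classical
  obtain ⟨hr, hne, hdisj, hcover, hok, hBne, hlast, heval⟩ := h
  have hex : ∀ v : Fin n, ∃ i, i < r ∧ v ∈ L i := by
    intro v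
    have hv : v ∈ (Finset.range r).biUnion L := by rw [hcover]; exact Finset.mem_univ v
    rw [Finset.mem_biUnion] at hv
    obtain ⟨i, hi, hvi⟩ := hv
    exact ⟨i, Finset.mem_range.mp hi, hvi⟩
  set lo : Fin n → ℕ := fun v => Nat.find (hex v) with hlo
  have hlo1 : ∀ v, lo v < r ∧ v ∈ L (lo v) := fun v => Nat.find_spec (hex v)
  have hlouniq : ∀ v i, i < r → v ∈ L i → lo v = i := by
    intro v i hi hv
    by_contra hne2
    exact (Finset.disjoint_left.mp (hdisj (lo v) (hlo1 v).1 i hi hne2) (hlo1 v).2) hv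
  set σ : Equiv.Perm (Fin n) := Tuple.sort lo with hσ
  have hmono : Monotone (lo ∘ ⇑σ) := Tuple.monotone_sort lo
  set C : ℕ → ZMod p := fun i => ∑ j ∈ Finset.range (i + 1), B j with hC
  set bb : Fin (n + 1) → ZMod p := fun k =>
    if (k : ℕ) = n then (∑ j ∈ Finset.range r, B j) + B r
    else C (lo (σ ⟨min (k : ℕ) (n - 1), by omega⟩)) with hbb
  have hbbval : ∀ k : Fin (n + 1), (k : ℕ) ≠ n →
      bb k = C (lo (σ ⟨min (k : ℕ) (n - 1), by omega⟩)) := by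
    intro k hk; simp only [hbb]; rw [if_neg hk]
  have hbblast : bb (Fin.last n) = (∑ j ∈ Finset.range r, B j) + B r := by
    simp only [hbb]; rw [if_pos (by simp)]
  have hlolast : ∀ j : Fin n, (j : ℕ) = n - 1 → lo (σ j) = r - 1 := by
    intro j hj
    obtain ⟨v₀, hv₀⟩ := hne (r - 1) (by omega)
    have h1 : lo v₀ = r - 1 := hlouniq v₀ (r - 1) (by omega) hv₀
    have hvj : σ (σ.symm v₀) = v₀ := σ.apply_symm_apply v₀
    have h2 : lo (σ (σ.symm v₀)) = r - 1 := by rw [hvj]; exact h1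
    have h3 : (lo ∘ ⇑σ) (σ.symm v₀) ≤ (lo ∘ ⇑σ) j := by
      apply hmono
      rw [Fin.le_def]
      have := (σ.symm v₀).isLt
      omega
    simp only [Function.comp_apply] at h3
    have h4 : lo (σ j) < r := (hlo1 _).1
    omega
  have hidx : ∀ (k : Fin n) (pf : min ((k.castSucc : Fin (n + 1)) : ℕ) (n - 1) < n),
      (⟨min ((k.castSucc : Fin (n + 1)) : ℕ) (n - 1), pf⟩ : Fin n) = k := by
    intro k pf
    apply Fin.ext
    show min (k : ℕ) (n - 1) = (k : ℕ)
    have := k.isLt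
    omega
  refine ⟨σ, fun k => T (σ k), bb, fun k => hok (σ k), ?_, ?_, ?_⟩
  · -- b_{n-1} ≠ b_n
    rw [hbbval ⟨n - 1, Nat.lt_succ_of_le (Nat.sub_le n 1)⟩ (by show n - 1 ≠ n; omega),
      hbblast]
    have h1 : lo (σ (⟨min ((⟨n - 1, Nat.lt_succ_of_le (Nat.sub_le n 1)⟩ : Fin (n+1)) : ℕ) (n - 1),
        by omega⟩ : Fin n)) = r - 1 :=
      hlolast _ (by show min (n - 1) (n - 1) = n - 1; omega)
    rw [h1]
    have h2 : C (r - 1) = ∑ j ∈ Finset.range r, B j := by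
      simp only [hC]
      have hrr : r - 1 + 1 = r := by omega
      rw [hrr]
    rw [h2]
    intro hc
    exact hBne r hr le_rfl (by linear_combination -hc)
  · -- first NCAlong condition
    intro k x hprior hk
    have hi₀ : lo (σ k) < r := (hlo1 _).1
    rw [heval x, nestedVal_firstZero r _ B (B r) (lo (σ k)) hi₀ ?_ ?_]
    · rw [hbbval k.castSucc (by have := k.isLt; show (k : ℕ) ≠ n; omega), hidx k _]
    · intro i hi
      apply Finset.prod_eq_one
      intro v hv
      have hloi : lo v = i := hlouniq v i (by omega) hv
      have hvj : σ (σ.symm v) = v := σ.apply_symm_apply v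
      have hjk : σ.symm v < k := by
        by_contra hcon
        push_neg at hcon
        have h5 : (lo ∘ ⇑σ) k ≤ (lo ∘ ⇑σ) (σ.symm v) := hmono hcon
        simp only [Function.comp_apply, hvj] at h5
        omega
      have hout := hprior (σ.symm v) hjk
      apply Q_eq_one
      intro hc
      apply hout
      show x (σ (σ.symm v)) ∈ T (σ (σ.symm v))
      rw [hvj]
      exact hc
    · apply Finset.prod_eq_zero (i := σ k)
      · exact (hlo1 (σ k)).2
      · exact Q_eq_zero hk
  · -- default NCAlong condition
    intro x hall
    rw [heval x, nestedVal_allOne r _ B (B r) ?_]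
    · rw [hbblast]; ring
    · intro i _
      apply Finset.prod_eq_one
      intro v _
      apply Q_eq_one
      have hvj : σ (σ.symm v) = v := σ.apply_symm_apply v
      intro hc
      apply hall (σ.symm v)
      show x (σ (σ.symm v)) ∈ T (σ (σ.symm v))
      rw [hvj]
      exact hc


/-- `f : F_p^n → F_p` (`n ≥ 2`) is nested canalizing iff it admits a layered
representation `f = M_1(M_2(⋯(M_{r-1}(B_{r+1}·M_r + B_r) + B_{r-1})⋯) + B_2) + B_1`,
where the `M_i` are products of indicator functions of intervals over index sets
partitioning `{1,…,n}`, each layer is nonempty, `B_2,…,B_{r+1} ≠ 0`, and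
`B_r + B_{r+1} ≠ 0` whenever `k_r = 1`. -/
theorem stmt8 (p n : ℕ) [Fact p.Prime] (hn : 2 ≤ n) (f : (Fin n → ZMod p) → ZMod p) :
    IsNCF p n f ↔
      ∃ (r : ℕ) (L : ℕ → Finset (Fin n)) (T : Fin n → Set (ZMod p)) (B : ℕ → ZMod p),
        IsLayeredRep (IsInterval p) n f r L T B :=
  ⟨fun h => ncf_to_layered hn h, fun ⟨_, _, _, _, h⟩ => layered_to_ncf hn h⟩
end

section
/- Let p be a prime, F = F_p, n ≥ 2, and let f : F^n → F be written as f = M_1(M_2(⋯(M_{r-1}(B_{r+1}·M_r + B_r) + B_{r-1})⋯) + B_2) + B_1, where M_i = ∏_{j=1}^{k_i} Q_{S_{i_j}}(x_{i_j}) are products of indicator functions of intervals over index sets partitioning {1,...,n}, k_i ≥ 1, B_1 ∈ F, B_2,...,B_{r+1} nonzero, and B_r + B_{r+1} ≠ 0 if k_r = 1. Then a variable x_m is a canalizing variable of f (i.e., f is <m:a:b> canalizing for some a, b ∈ F) if and only if x_m is one of the variables of M_1; moreover every canalizing variable has canalized output B_1. -/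
open Finset

lemma interval_nonempty_proper (p : ℕ) [Fact p.Prime] {S : Set (ZMod p)}
    (h : IsInterval p S) : (∃ a, a ∈ S) ∧ (∃ a, a ∉ S) := by
  have hp : p.Prime := Fact.out
  haveI : NeZero p := ⟨hp.ne_zero⟩
  obtain ⟨j, hj, hS | hS⟩ := h
  · constructor
    · exact ⟨0, by simp [hS, ZMod.val_zero]⟩
    · refine ⟨((j + 1 : ℕ) : ZMod p), ?_⟩
      simp only [hS, Set.mem_setOf_eq, not_le]
      rw [ZMod.val_natCast_of_lt (by omega : j + 1 < p)]
      omega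
  · constructor
    · refine ⟨((j + 1 : ℕ) : ZMod p), ?_⟩
      simp only [hS, Set.mem_compl_iff, Set.mem_setOf_eq, not_le]
      rw [ZMod.val_natCast_of_lt (by omega : j + 1 < p)]
      omega
    · refine ⟨0, ?_⟩
      simp [hS, ZMod.val_zero]

lemma nv_ones_zero {F : Type*} [CommRing F] :
    ∀ (r k : ℕ) (μ B : ℕ → F) (c : F), k < r → (∀ i, i < k → μ i = 1) → μ k = 0 →
      nestedVal r μ B c = ∑ i ∈ Finset.range (k + 1), B i := by
  intro r
  induction r with
  | zero => intro k μ B c hk; omega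
  | succ r ih =>
    intro k μ B c hk h1 h0
    match k with
    | 0 =>
      simp only [nestedVal, h0, Finset.sum_range_one, zero_mul, zero_add]
    | k + 1 =>
      simp only [nestedVal]
      rw [h1 0 (by omega), one_mul,
        ih k _ _ c (by omega) (fun i hi => h1 (i + 1) (by omega)) h0,
        Finset.sum_range_succ' B (k + 1)]

lemma nv_all_ones {F : Type*} [CommRing F] :
    ∀ (r : ℕ) (μ B : ℕ → F) (c : F), (∀ i, i < r → μ i = 1) →
      nestedVal r μ B c = c + ∑ i ∈ Finset.range r, B i := by
  intro r
  induction r with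
  | zero => intro μ B c _; simp [nestedVal]
  | succ r ih =>
    intro μ B c h1
    simp only [nestedVal]
    rw [h1 0 (by omega), one_mul, ih _ _ c (fun i hi => h1 (i + 1) (by omega)),
      Finset.sum_range_succ' B r]
    ring

noncomputable def asg {p n : ℕ} (gIn gOut : Fin n → ZMod p) (m : Fin n)
    (a : ZMod p) (Z : Finset (Fin n)) (j : Fin n) : ZMod p :=
  if j = m then a else if j ∈ Z then gIn j else gOut j


/-- In a layered representation of `f : F_p^n → F_p`, a variable `x_m` is a
canalizing variable of `f` iff it is a variable of the first layer `M_1`; moreover every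
canalizing variable has canalized output `B_1`. -/
theorem stmt10 (p n : ℕ) [Fact p.Prime] (hn : 2 ≤ n)
    (f : (Fin n → ZMod p) → ZMod p)
    (r : ℕ) (L : ℕ → Finset (Fin n)) (T : Fin n → Set (ZMod p)) (B : ℕ → ZMod p)
    (hrep : IsLayeredRep (IsInterval p) n f r L T B) (m : Fin n) :
    ((∃ a b : ZMod p, IsCanalizing f m a b) ↔ m ∈ L 0) ∧
    (∀ a b : ZMod p, IsCanalizing f m a b → b = B 0) := by
  classical
  obtain ⟨hr1, hneL, hdisj, hcover, hTint, hBne, hlast, hf⟩ := hrep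
  have hIp := fun j => interval_nonempty_proper p (hTint j)
  choose gIn hgIn using fun j => (hIp j).1
  choose gOut hgOut using fun j => (hIp j).2
  have hXm : ∀ (a : ZMod p) (Z : Finset (Fin n)), asg gIn gOut m a Z m = a := by
    intro a Z; simp [asg]
  have hdisj' : ∀ {i z : ℕ} {j : Fin n}, i < r → z < r → i ≠ z → j ∈ L i → j ∈ L z → False :=
    fun {i z j} hi hz hne' hji hjz =>
      Finset.disjoint_left.mp (hdisj i hi z hz hne') hji hjz
  have hne_m : ∀ {z : ℕ} {j : Fin n}, z < r → j ∈ L z →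
      ∀ {t' : ℕ}, t' < r → t' ≠ z → m ∈ L t' → j ≠ m := by
    intro z j hz hj t' ht' htz hmt' h
    subst h
    exact hdisj' ht' hz htz hmt' hj
  have hlayer : ∀ j : Fin n, ∃ i, i < r ∧ j ∈ L i := by
    intro j
    have hj : j ∈ (Finset.range r).biUnion L := by rw [hcover]; exact Finset.mem_univ j
    obtain ⟨i, hi, hji⟩ := Finset.mem_biUnion.mp hj
    exact ⟨i, Finset.mem_range.mp hi, hji⟩
  have prod_one : ∀ (a : ZMod p) (Z : Finset (Fin n)) (i : ℕ),
      (∀ j ∈ L i, j ∉ Z) → (m ∈ L i → a ∉ T m) →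
      ∏ j ∈ L i, Q (T j) (asg gIn gOut m a Z j) = 1 := by
    intro a Z i hZ hma
    refine Finset.prod_eq_one fun j hj => ?_
    by_cases hjm : j = m
    · subst hjm
      rw [hXm]
      exact Q_eq_one (hma hj)
    · have hx : asg gIn gOut m a Z j = gOut j := by simp [asg, hjm, hZ j hj]
      rw [hx]; exact Q_eq_one (hgOut j)
  have prod_zero : ∀ (y : Fin n → ZMod p) (i : ℕ) (j0 : Fin n),
      j0 ∈ L i → y j0 ∈ T j0 → ∏ j ∈ L i, Q (T j) (y j) = 0 :=
    fun y i j0 hj0 hy => Finset.prod_eq_zero hj0 (Q_eq_zero hy)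
  have key : ∀ (a : ZMod p) (Z : Finset (Fin n)) (k : ℕ), k < r →
      (∀ i, i < k → ∀ j ∈ L i, j ∉ Z) → (∀ i, i < k → m ∈ L i → a ∉ T m) →
      ((∃ j0, j0 ∈ L k ∧ j0 ∈ Z ∧ j0 ≠ m) ∨ (m ∈ L k ∧ a ∈ T m)) →
      f (asg gIn gOut m a Z) = ∑ i ∈ Finset.range (k + 1), B i := by
    intro a Z k hk hZ hma hzero
    rw [hf]
    refine nv_ones_zero r k _ B _ hk (fun i hi => prod_one a Z i (hZ i hi) (hma i hi)) ?_
    rcases hzero with ⟨j0, hj0L, hj0Z, hj0m⟩ | ⟨hmk, haT⟩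
    · refine prod_zero _ k j0 hj0L ?_
      have hx : asg gIn gOut m a Z j0 = gIn j0 := by simp [asg, hj0m, hj0Z]
      rw [hx]; exact hgIn j0
    · refine prod_zero _ k m hmk ?_
      rw [hXm]; exact haT
  have key' : ∀ (a : ZMod p) (k : ℕ) (j' : Fin n), k < r → j' ∈ L k → j' ≠ m →
      (∀ i, i < k → m ∈ L i → a ∉ T m) →
      f (asg gIn gOut m a {j'}) = ∑ i ∈ Finset.range (k + 1), B i := by
    intro a k j' hk hj' hj'm hma
    refine key a {j'} k hk ?_ hma (Or.inl ⟨j', hj', Finset.mem_singleton_self j', hj'm⟩)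
    intro i hi j hj hjZ
    have hjj : j = j' := Finset.mem_singleton.mp hjZ
    exact hdisj' (by omega) hk (by omega) hj (by rw [hjj]; exact hj')
  have key'' : ∀ (a : ZMod p) (k : ℕ), k < r → m ∈ L k → a ∈ T m →
      (∀ i, i < k → m ∈ L i → a ∉ T m) →
      f (asg gIn gOut m a ∅) = ∑ i ∈ Finset.range (k + 1), B i := by
    intro a k hk hmk haT hma
    exact key a ∅ k hk (fun i _ j _ h => absurd h (Finset.notMem_empty j)) hma
      (Or.inr ⟨hmk, haT⟩)
  have key1' : ∀ a : ZMod p, (∀ i, i < r → m ∈ L i → a ∉ T m) →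
      f (asg gIn gOut m a ∅) = B r + ∑ i ∈ Finset.range r, B i := by
    intro a hma
    rw [hf]
    exact nv_all_ones r _ B _
      (fun i hi => prod_one a ∅ i (fun j _ h => absurd h (Finset.notMem_empty j)) (hma i hi))
  have gen0 : ∀ (y : Fin n → ZMod p), m ∈ L 0 → y m ∈ T m → f y = B 0 := by
    intro y hm0 hym
    rw [hf, nv_ones_zero r 0 _ B _ hr1 (fun i hi => absurd hi (by omega))
      (prod_zero y 0 m hm0 hym), Finset.sum_range_one]
  have two_vals : ∀ a : ZMod p, m ∉ L 0 ∨ (L 0 = {m} ∧ a ∉ T m) →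
      ∃ y1 y2 : Fin n → ZMod p, y1 m = a ∧ y2 m = a ∧ f y1 ≠ f y2 := by
    intro a hcase
    rcases hcase with hm0 | ⟨hL0, haT⟩
    · -- m ∉ L 0
      obtain ⟨t, htr, hmt⟩ := hlayer m
      have ht1 : 1 ≤ t := by
        rcases t with _ | t
        · exact absurd hmt hm0
        · omega
      have hr2 : 2 ≤ r := by omega
      obtain ⟨j0, hj0⟩ := hneL 0 hr1
      have hj0m : j0 ≠ m := fun h => hm0 (by rw [← h]; exact hj0)
      have v1 : f (asg gIn gOut m a {j0}) = B 0 := by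
        rw [key' a 0 j0 hr1 hj0 hj0m (fun i hi => absurd hi (by omega)), Finset.sum_range_one]
      have hma0 : ∀ i, i < 1 → m ∈ L i → a ∉ T m := by
        intro i hi hmi
        have h0 : i = 0 := by omega
        rw [h0] at hmi
        exact absurd hmi hm0
      obtain ⟨y2, hy2m, hy2ne⟩ : ∃ y2, y2 m = a ∧ f y2 ≠ B 0 := by
        by_cases hL1 : ∃ j1 ∈ L 1, j1 ≠ m
        · obtain ⟨j1, hj1, hj1m⟩ := hL1
          refine ⟨_, hXm a {j1}, ?_⟩
          rw [key' a 1 j1 hr2 hj1 hj1m hma0]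
          simp only [Finset.sum_range_succ, Finset.sum_range_zero, zero_add]
          intro h
          exact hBne 1 (by omega) (by omega) (by linear_combination h)
        · push_neg at hL1
          obtain ⟨j1, hj1⟩ := hneL 1 hr2
          have hm1 : m ∈ L 1 := by rw [← hL1 j1 hj1]; exact hj1
          by_cases haT : a ∈ T m
          · refine ⟨_, hXm a ∅, ?_⟩
            rw [key'' a 1 hr2 hm1 haT hma0]
            simp only [Finset.sum_range_succ, Finset.sum_range_zero, zero_add]
            intro h
            exact hBne 1 (by omega) (by omega) (by linear_combination h)
          · rcases eq_or_lt_of_le hr2 with hr2' | hr3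
            · -- r = 2
              subst hr2'
              have hcard : (L 1).card = 1 := by
                have hs : L 1 = {m} := Finset.eq_singleton_iff_unique_mem.mpr ⟨hm1, hL1⟩
                rw [hs]; exact Finset.card_singleton m
              have h12 : B 1 + B 2 ≠ 0 := by
                have e : (2 : ℕ) - 1 = 1 := by norm_num
                rw [e] at hlast
                exact hlast hcard
              refine ⟨_, hXm a ∅, ?_⟩
              rw [key1' a (fun _ _ _ => haT)]
              simp only [Finset.sum_range_succ, Finset.sum_range_zero, zero_add]
              intro h
              exact h12 (by linear_combination h)
            · by_cases h12 : B 1 + B 2 = 0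
              · have hr3le : 3 ≤ r := hr3
                rcases eq_or_lt_of_le hr3le with hreq | hr4
                · -- r = 3
                  subst hreq
                  refine ⟨_, hXm a ∅, ?_⟩
                  rw [key1' a (fun _ _ _ => haT)]
                  simp only [Finset.sum_range_succ, Finset.sum_range_zero, zero_add]
                  intro h
                  exact hBne 3 (by omega) (by omega) (by linear_combination h - h12)
                · -- r ≥ 4
                  obtain ⟨j3, hj3⟩ := hneL 3 (by omega)
                  have hj3m : j3 ≠ m :=
                    hne_m (by omega : 3 < r) hj3 (by omega : 1 < r) (by omega) hm1
                  refine ⟨_, hXm a {j3}, ?_⟩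
                  rw [key' a 3 j3 (by omega) hj3 hj3m (fun _ _ _ => haT)]
                  simp only [Finset.sum_range_succ, Finset.sum_range_zero, zero_add]
                  intro h
                  exact hBne 3 (by omega) (by omega) (by linear_combination h - h12)
              · obtain ⟨j2, hj2⟩ := hneL 2 (by omega)
                have hj2m : j2 ≠ m :=
                  hne_m (by omega : 2 < r) hj2 (by omega : 1 < r) (by omega) hm1
                refine ⟨_, hXm a {j2}, ?_⟩
                rw [key' a 2 j2 (by omega) hj2 hj2m (fun _ _ _ => haT)]
                simp only [Finset.sum_range_succ, Finset.sum_range_zero, zero_add]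
                intro h
                exact h12 (by linear_combination h)
      exact ⟨_, y2, hXm a {j0}, hy2m, by rw [v1]; exact Ne.symm hy2ne⟩
    · -- L 0 = {m}, a ∉ T m
      have hm0 : m ∈ L 0 := by rw [hL0]; exact Finset.mem_singleton_self m
      obtain ⟨j', hj'm⟩ : ∃ j' : Fin n, j' ≠ m := by
        by_cases h : m = ⟨0, by omega⟩
        · refine ⟨⟨1, by omega⟩, ?_⟩
          rw [h]
          simp [Fin.ext_iff]
        · exact ⟨⟨0, by omega⟩, fun hh => h hh.symm⟩
      obtain ⟨z, hz, hjz⟩ := hlayer j'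
      have hz0 : z ≠ 0 := by
        intro h
        rw [h, hL0, Finset.mem_singleton] at hjz
        exact hj'm hjz
      have hr2 : 2 ≤ r := by omega
      obtain ⟨j1, hj1⟩ := hneL 1 hr2
      have hj1m : j1 ≠ m := hne_m (by omega : 1 < r) hj1 (by omega : 0 < r) (by omega) hm0
      have v1 : f (asg gIn gOut m a {j1}) = ∑ i ∈ Finset.range 2, B i :=
        key' a 1 j1 hr2 hj1 hj1m (fun _ _ _ => haT)
      rcases eq_or_lt_of_le hr2 with hr2' | hr3
      · subst hr2'
        have v2 : f (asg gIn gOut m a ∅) = B 2 + ∑ i ∈ Finset.range 2, B i :=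
          key1' a (fun _ _ _ => haT)
        refine ⟨_, _, hXm a {j1}, hXm a ∅, ?_⟩
        rw [v1, v2]
        intro h
        exact hBne 2 (by omega) (by omega) (by linear_combination -h)
      · obtain ⟨j2, hj2⟩ := hneL 2 (by omega)
        have hj2m : j2 ≠ m := hne_m (by omega : 2 < r) hj2 (by omega : 0 < r) (by omega) hm0
        have v2 : f (asg gIn gOut m a {j2}) = ∑ i ∈ Finset.range 3, B i :=
          key' a 2 j2 (by omega) hj2 hj2m (fun _ _ _ => haT)
        refine ⟨_, _, hXm a {j1}, hXm a {j2}, ?_⟩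
        rw [v1, v2]
        simp only [Finset.sum_range_succ, Finset.sum_range_zero, zero_add]
        intro h
        exact hBne 2 (by omega) (by omega) (by linear_combination -h)
  have hiff : (∃ a b : ZMod p, IsCanalizing f m a b) ↔ m ∈ L 0 := by
    constructor
    · rintro ⟨a, b, hc⟩
      by_contra hm0
      obtain ⟨y1, y2, h1, h2, hne12⟩ := two_vals a (Or.inl hm0)
      exact hne12 ((hc y1 h1).trans (hc y2 h2).symm)
    · intro hm0
      exact ⟨gIn m, B 0, fun y hy => gen0 y hm0 (by rw [hy]; exact hgIn m)⟩
  refine ⟨hiff, ?_⟩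
  intro a b hc
  have hm0 : m ∈ L 0 := hiff.mp ⟨a, b, hc⟩
  by_cases haT : a ∈ T m
  · have h1 : f (asg gIn gOut m a ∅) = B 0 := gen0 _ hm0 (by rw [hXm]; exact haT)
    exact (hc _ (hXm a ∅)).symm.trans h1
  · by_cases hj0 : ∃ j0 ∈ L 0, j0 ≠ m
    · obtain ⟨j0, hj0L, hj0m⟩ := hj0
      have h1 : f (asg gIn gOut m a {j0}) = B 0 := by
        rw [key' a 0 j0 hr1 hj0L hj0m (fun i hi => absurd hi (by omega)), Finset.sum_range_one]
      exact (hc _ (hXm a {j0})).symm.trans h1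
    · push_neg at hj0
      have hL0 : L 0 = {m} := Finset.eq_singleton_iff_unique_mem.mpr ⟨hm0, hj0⟩
      obtain ⟨y1, y2, h1, h2, hne12⟩ := two_vals a (Or.inr ⟨hL0, haT⟩)
      exact absurd ((hc y1 h1).trans (hc y2 h2).symm) hne12
end

section
/- Let p = 2 and F = F_2, and let n ≥ 2. In any layered representation f = M_1(M_2(⋯(M_{r-1}(B_{r+1}·M_r + B_r) + B_{r-1})⋯) + B_2) + B_1 of a nested canalizing function f : F_2^n → F_2 (with M_i products of k_i ≥ 1 indicator functions of intervals over a partition of {1,...,n}, B_2,...,B_{r+1} ≠ 0, and B_r + B_{r+1} ≠ 0 if k_r = 1), the last layer satisfies k_r ≥ 2. -/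
open Finset

/-- Over `F_2`, in any layered representation of a nested canalizing function
`f : F_2^n → F_2` (`n ≥ 2`), the last layer contains at least two variables, i.e. `k_r ≥ 2`. -/
theorem stmt11 (n : ℕ) (hn : 2 ≤ n) (f : (Fin n → ZMod 2) → ZMod 2)
    (r : ℕ) (L : ℕ → Finset (Fin n)) (T : Fin n → Set (ZMod 2)) (B : ℕ → ZMod 2)
    (hrep : IsLayeredRep (IsInterval 2) n f r L T B) :
    2 ≤ (L (r - 1)).card := by
  obtain ⟨hr, hnonempty, _, hcover, _, hB, hlast, _⟩ := hrep
  by_contra hlt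
  push_neg at hlt
  have hne : (L (r - 1)).Nonempty := by
    exact hnonempty (r - 1) (by omega)
  have hcard : (L (r - 1)).card = 1 := by
    have := Finset.card_pos.mpr hne; omega
  rcases Nat.lt_or_ge r 2 with h1 | h2
  · -- r = 1, so L 0 = univ, card n ≥ 2
    have hr1 : r = 1 := by omega
    have : (Finset.range 1).biUnion L = Finset.univ := hr1 ▸ hcover
    rw [Finset.range_one, Finset.singleton_biUnion] at this
    have : (L 0).card = n := by rw [this, Finset.card_univ, Fintype.card_fin]
    simp [hr1] at hcard
    omega
  · have hBr1 : B (r - 1) = 1 := by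
      have h := hB (r - 1) (by omega) (by omega)
      revert h; generalize B (r-1) = a; revert a; decide
    have hBr : B r = 1 := by
      have h := hB r (by omega) (by omega)
      revert h; generalize B r = a; revert a; decide
    exact hlast hcard (by rw [hBr1, hBr]; decide)
end
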